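/- Let N ≥ 5 and let A ∈ ℝ^{(N+1)×(N+1)} be the matrix with rows indexed by 0,…,N given by: row 0 has entries λ₁, −1, μ₁ in columns 0, 1, 2; row i for 1 ≤ i ≤ N−1 has entries μ_i, 2, λ_i in columns i−1, i, i+1; row N has entries λ_{N−1}, −1, μ_{N−1} in columns N−2, N−1, N; all other entries are zero, where μ_i, λ_i ∈ (0,1) and μ_i + λ_i = 1 for every i = 1,…,N−1. Then ‖A‖_∞ = 3 and cond_∞(A) := ‖A‖_∞ ‖A⁻¹‖_∞ < 54. -/

import Mathlib

/-!
Let `A x = y` with `|y_k| ≤ s`. An interior row `μ x_{k-1} + 2 x_k + λ x_{k+1} = y_k` with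
`μ + λ = 1` gives `2 |x_k| ≤ s + max |x_{k±1}|`. Eliminating `x₀` between the first two rows gives
`(1 + λ₁) x₁ = (μ₁ - λ₁) x₂ - μ₁ y₀ + λ₁ y₁`, hence `|x₁| ≤ |x₂| + s`, and the same holds at the
right end since reversing the breakpoints only swaps `μ` and `λ`. At the interior index where
`|x_k|` is largest these bounds force `|x_k| ≤ 3 s`, and `2 row₀ + row₁`, namely
`(1 + λ₁) x₀ + (1 + μ₁) x₂ = 2 y₀ + y₁`, then gives `|x₀| ≤ 9 s`. So `‖A⁻¹‖_∞ ≤ 9`, while the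
row sums of `A` are `2, 3, …, 3, 2`; hence `cond_∞(A) ≤ 27`.
-/

/-- The matrix norm induced by the max norm on `ℝⁿ`: the maximum absolute row sum. -/
noncomputable def rowSumNorm {n : ℕ} (A : Matrix (Fin n) (Fin n) ℝ) : ℝ :=
  ⨆ i, ∑ j, |A i j|

open Matrix

theorem rowSumNorm_eq_of_le {n : ℕ} {A : Matrix (Fin n) (Fin n) ℝ} {c : ℝ}
    (hle : ∀ i, ∑ j, |A i j| ≤ c) (i₀ : Fin n) (h : ∑ j, |A i₀ j| = c) : rowSumNorm A = c := by
  have : Nonempty (Fin n) := ⟨i₀⟩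
  refine le_antisymm (ciSup_le hle) (h ▸ ?_)
  exact le_ciSup (f := fun i => ∑ j, |A i j|) (Set.finite_range _).bddAbove i₀

theorem rowSumNorm_inv_le {n : ℕ} {A : Matrix (Fin n) (Fin n) ℝ} {c : ℝ} (hc : 0 ≤ c)
    (h : ∀ x s, (∀ i, |(A *ᵥ x) i| ≤ s) → ∀ i, |x i| ≤ c * s) : rowSumNorm A⁻¹ ≤ c := by
  have hA : IsUnit A.det := by
    refine isUnit_iff_ne_zero.mpr fun h0 => ?_
    obtain ⟨v, hv, hAv⟩ := exists_mulVec_eq_zero_iff.mpr h0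
    exact hv (funext fun i => abs_nonpos_iff.mp (by simpa [hAv] using h v 0 (by simp [hAv]) i))
  refine Real.iSup_le (fun i => ?_) hc
  -- against the sign vector of row `i`, the `i`-th entry of `A⁻¹ y` is that row's absolute sum
  set y : Fin n → ℝ := fun j => SignType.sign (A⁻¹ i j)
  have hy : ∀ j, |y j| ≤ 1 := fun j => by
    rcases hs : SignType.sign (A⁻¹ i j) <;> simp [y, hs]
  have hx := h (A⁻¹ *ᵥ y) 1 (by rwa [mulVec_mulVec, mul_nonsing_inv _ hA, one_mulVec]) i
  have hrow : (A⁻¹ *ᵥ y) i = ∑ j, |A⁻¹ i j| := by simp [mulVec, dotProduct, y]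
  linarith [le_abs_self ((A⁻¹ *ᵥ y) i)]

theorem Fintype.sum_eq_add_add {ι M : Type*} [Fintype ι] [DecidableEq ι] [AddCommMonoid M]
    {f : ι → M} {a b c : ι} (hab : a ≠ b) (hac : a ≠ c) (hbc : b ≠ c)
    (h : ∀ j, j ≠ a → j ≠ b → j ≠ c → f j = 0) :
    ∑ j, f j = f a + f b + f c := by
  rw [← Finset.sum_subset (Finset.subset_univ {a, b, c}) fun j _ hj => by simp_all,
    Finset.sum_insert (by simp [hab, hac]), Finset.sum_pair hbc, add_assoc]

section ThreeTerm
variable {μ l a b c y y₀ y₁ s m : ℝ}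

theorem two_mul_abs_le_of_row (hμ : 0 ≤ μ) (hl : 0 ≤ l) (hμl : μ + l = 1)
    (e : μ * a + 2 * b + l * c = y) (ha : |a| ≤ m) (hc : |c| ≤ m) :
    2 * |b| ≤ |y| + m := by
  rw [abs_le] at ha hc
  rcases abs_cases b with ⟨hb, -⟩ | ⟨hb, -⟩ <;> rw [hb] <;>
    nlinarith [le_abs_self y, neg_abs_le y]

theorem abs_le_of_corner_rows (hμ : 0 ≤ μ) (hl : 0 ≤ l) (hμl : μ + l = 1)
    (e₀ : l * a - b + μ * c = y₀) (e₁ : μ * a + 2 * b + l * c = y₁)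
    (h₀ : |y₀| ≤ s) (h₁ : |y₁| ≤ s) : |b| ≤ |c| + s := by
  have key : (1 + l) * b = (μ - l) * c - μ * y₀ + l * y₁ := by
    linear_combination l * e₁ - μ * e₀ - (b + (l - μ) * c) * hμl
  rw [abs_le] at *
  constructor <;> nlinarith [le_abs_self c, neg_abs_le c]

theorem abs_le_of_end_rows (hl : 0 ≤ l) (hμl : μ + l = 1)
    (e₀ : l * a - b + μ * c = y₀) (e₁ : μ * a + 2 * b + l * c = y₁)
    (h₀ : |y₀| ≤ s) (h₁ : |y₁| ≤ s) : |a| ≤ 2 * |c| + 3 * s := by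
  have key : (1 + l) * a + (1 + μ) * c = 2 * y₀ + y₁ := by
    linear_combination 2 * e₀ + e₁ - (a + c) * hμl
  rw [abs_le] at *
  constructor <;> nlinarith [le_abs_self c, neg_abs_le c]

end ThreeTerm

def SplineWeights (N : ℕ) (μ lam : ℕ → ℝ) : Prop :=
  ∀ k, 1 ≤ k → k + 1 ≤ N → 0 ≤ μ k ∧ 0 ≤ lam k ∧ μ k + lam k = 1

structure NotAKnotSystem (N : ℕ) (μ lam x y : ℕ → ℝ) : Prop where
  weights : SplineWeights N μ lam
  first : lam 1 * x 0 - x 1 + μ 1 * x 2 = y 0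
  interior : ∀ k, 1 ≤ k → k + 1 ≤ N → μ k * x (k - 1) + 2 * x k + lam k * x (k + 1) = y k
  last : lam (N - 1) * x (N - 2) - x (N - 1) + μ (N - 1) * x N = y N

namespace NotAKnotSystem
variable {N : ℕ} {μ lam x y : ℕ → ℝ} {s : ℝ}

theorem reverse (hN : 2 ≤ N) (h : NotAKnotSystem N μ lam x y) :
    NotAKnotSystem N (fun k => lam (N - k)) (fun k => μ (N - k))
      (fun k => x (N - k)) (fun k => y (N - k)) where
  weights k hk hkN := by
    obtain ⟨hμ, hl, hμl⟩ := h.weights (N - k) (by omega) (by omega)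
    exact ⟨hl, hμ, by linarith⟩
  first := by
    simp only [Nat.sub_zero]
    linarith [h.last]
  interior k hk hkN := by
    have e := h.interior (N - k) (by omega) (by omega)
    rw [show N - k - 1 = N - (k + 1) by omega, show N - k + 1 = N - (k - 1) by omega] at e
    linarith
  last := by
    rw [show N - (N - 1) = 1 by omega, show N - (N - 2) = 2 by omega, Nat.sub_self]
    linarith [h.first]

variable (h : NotAKnotSystem N μ lam x y) (hy : ∀ k, |y k| ≤ s)
include h hy

theorem abs_one_le (hN : 2 ≤ N) : |x 1| ≤ |x 2| + s :=
  have ⟨hμ, hl, hμl⟩ := h.weights 1 le_rfl hN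
  abs_le_of_corner_rows hμ hl hμl h.first (h.interior 1 le_rfl hN) (hy 0) (hy 1)

theorem abs_zero_le (hN : 2 ≤ N) : |x 0| ≤ 2 * |x 2| + 3 * s :=
  have ⟨_, hl, hμl⟩ := h.weights 1 le_rfl hN
  abs_le_of_end_rows hl hμl h.first (h.interior 1 le_rfl hN) (hy 0) (hy 1)

theorem abs_le_three_mul (hN : 4 ≤ N) {k : ℕ} (hk : 1 ≤ k) (hkN : k + 1 ≤ N) :
    |x k| ≤ 3 * s := by
  obtain ⟨i₀, hi₀, hmax⟩ :=
    (Finset.Icc 1 (N - 1)).exists_max_image (fun k => |x k|) ⟨1, by simp; omega⟩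
  set m := |x i₀|
  have hm : ∀ k, 1 ≤ k → k + 1 ≤ N → |x k| ≤ m := fun k h₁ h₂ => hmax k (by simp; omega)
  have inner : ∀ k, 2 ≤ k → k + 2 ≤ N → 2 * |x k| ≤ s + m := fun k h₁ h₂ => by
    obtain ⟨hμ, hl, hμl⟩ := h.weights k (by omega) (by omega)
    linarith [hy k, two_mul_abs_le_of_row hμ hl hμl (h.interior k (by omega) (by omega))
      (hm (k - 1) (by omega) (by omega)) (hm (k + 1) (by omega) (by omega))]
  have hs : 0 ≤ s := (abs_nonneg _).trans (hy 0)
  have bound : ∀ k, 1 ≤ k → k + 1 ≤ N → 2 * |x k| ≤ 3 * s + m := by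
    intro k h₁ h₂
    rcases (show k = 1 ∨ k = N - 1 ∨ (2 ≤ k ∧ k + 2 ≤ N) by omega) with rfl | rfl | ⟨h₁, h₂⟩
    · linarith [h.abs_one_le hy (by omega), inner 2 le_rfl hN]
    · have hrev := (h.reverse (by omega)).abs_one_le (fun k => hy _) (by omega)
      linarith [inner (N - 2) (by omega) (by omega)]
    · linarith [inner k h₁ h₂]
  linarith [bound i₀ (by simp at hi₀; omega) (by simp at hi₀; omega), hm k hk hkN]

theorem abs_le_nine_mul (hN : 4 ≤ N) {k : ℕ} (hk : k ≤ N) : |x k| ≤ 9 * s := by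
  have hs : 0 ≤ s := (abs_nonneg _).trans (hy 0)
  rcases (show k = 0 ∨ k = N ∨ (1 ≤ k ∧ k + 1 ≤ N) by omega) with rfl | rfl | ⟨h₁, h₂⟩
  · linarith [h.abs_zero_le hy (by omega), h.abs_le_three_mul hy hN (k := 2) (by omega) (by omega)]
  · have hrev := (h.reverse (by omega)).abs_zero_le (fun k => hy _) (by omega)
    simp only [Nat.sub_zero] at hrev
    linarith [h.abs_le_three_mul hy hN (k := k - 2) (by omega) (by omega)]
  · linarith [h.abs_le_three_mul hy hN h₁ h₂]

end NotAKnotSystem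

def notAKnotMatrix (N : ℕ) (μ lam : ℕ → ℝ) : Matrix (Fin (N + 1)) (Fin (N + 1)) ℝ :=
  Matrix.of fun i j =>
      if (i : ℕ) = 0 then
        (if (j : ℕ) = 0 then lam 1 else if (j : ℕ) = 1 then -1
         else if (j : ℕ) = 2 then μ 1 else 0)
      else if (i : ℕ) = N then
        (if (j : ℕ) = N - 2 then lam (N - 1) else if (j : ℕ) = N - 1 then -1
         else if (j : ℕ) = N then μ (N - 1) else 0)
      else
        (if (j : ℕ) + 1 = (i : ℕ) then μ (i : ℕ) else if (j : ℕ) = (i : ℕ) then 2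
         else if (j : ℕ) = (i : ℕ) + 1 then lam (i : ℕ) else 0)

section Rows
open Fin.NatCast
variable {N : ℕ} {μ lam : ℕ → ℝ} (F : Fin (N + 1) → ℝ → ℝ) (hF : ∀ j, F j 0 = 0)
include hF

theorem sum_notAKnotMatrix_row_eq {i a b c : ℕ} (hab : a < b) (hbc : b < c) (hcN : c ≤ N)
    {α β γ : ℝ} (hrow : ∀ j ≤ N, notAKnotMatrix N μ lam i j =
      if j = a then α else if j = b then β else if j = c then γ else 0) :
    ∑ j, F j (notAKnotMatrix N μ lam i j) = F a α + F b β + F c γ := by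
  have hv : ∀ m ≤ N, ((m : Fin (N + 1)) : ℕ) = m := fun m hm => Fin.val_cast_of_lt (by omega)
  have hrow' : ∀ j : Fin (N + 1), notAKnotMatrix N μ lam i j =
      if (j : ℕ) = a then α else if (j : ℕ) = b then β else if (j : ℕ) = c then γ else 0 := by
    intro j
    simpa using hrow j (by omega)
  rw [Fintype.sum_eq_add_add (a := (a : Fin (N + 1))) (b := (b : Fin (N + 1)))
    (c := (c : Fin (N + 1)))]
  · simp only [hrow', hv a (by omega), hv b (by omega), hv c hcN]
    split_ifs <;> first | rfl | omega
  · rw [ne_eq, Fin.ext_iff, hv a (by omega), hv b (by omega)]; omega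
  · rw [ne_eq, Fin.ext_iff, hv a (by omega), hv c hcN]; omega
  · rw [ne_eq, Fin.ext_iff, hv b (by omega), hv c hcN]; omega
  · intro j ha hb hc
    rw [ne_eq, Fin.ext_iff, hv _ (by omega)] at ha hb hc
    rw [hrow', if_neg ha, if_neg hb, if_neg hc, hF]

theorem sum_notAKnotMatrix_row_interior {k : ℕ} (hk : 1 ≤ k) (hkN : k + 1 ≤ N) :
    ∑ j, F j (notAKnotMatrix N μ lam k j) =
      F (k - 1 : ℕ) (μ k) + F k 2 + F (k + 1 : ℕ) (lam k) := by
  refine sum_notAKnotMatrix_row_eq F hF (by omega) (by omega) hkN fun j hj => ?_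
  simp only [notAKnotMatrix, Matrix.of_apply, Fin.val_cast_of_lt (Nat.lt_succ_of_le hj),
    Fin.val_cast_of_lt (by omega : k < N + 1)]
  split_ifs <;> first | rfl | omega

theorem sum_notAKnotMatrix_row_first (hN : 2 ≤ N) :
    ∑ j, F j (notAKnotMatrix N μ lam (0 : ℕ) j) =
      F (0 : ℕ) (lam 1) + F (1 : ℕ) (-1) + F (2 : ℕ) (μ 1) := by
  refine sum_notAKnotMatrix_row_eq F hF (by omega) (by omega) hN fun j hj => ?_
  simp only [notAKnotMatrix, Matrix.of_apply, Fin.val_cast_of_lt (Nat.lt_succ_of_le hj),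
    Fin.val_cast_of_lt (by omega : 0 < N + 1)]
  split_ifs <;> rfl

theorem sum_notAKnotMatrix_row_last (hN : 2 ≤ N) :
    ∑ j, F j (notAKnotMatrix N μ lam N j) =
      F (N - 2 : ℕ) (lam (N - 1)) + F (N - 1 : ℕ) (-1) + F N (μ (N - 1)) := by
  refine sum_notAKnotMatrix_row_eq F hF (by omega) (by omega) le_rfl fun j hj => ?_
  simp only [notAKnotMatrix, Matrix.of_apply, Fin.val_cast_of_lt (Nat.lt_succ_of_le hj),
    Fin.val_cast_of_lt (Nat.lt_succ_self N)]
  split_ifs <;> first | rfl | omega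

end Rows

section
open Fin.NatCast
variable {N : ℕ} {μ lam : ℕ → ℝ}

-- `(k : Fin (N + 1))` wraps around modulo `N + 1`; the system only reads indices `k ≤ N`.
theorem notAKnotSystem_mulVec (hN : 2 ≤ N)
    (hw : SplineWeights N μ lam)
    (x : Fin (N + 1) → ℝ) :
    NotAKnotSystem N μ lam (fun k => x k) (fun k => (notAKnotMatrix N μ lam *ᵥ x) k) where
  weights := hw
  first := by
    simp only [mulVec, dotProduct]
    rw [sum_notAKnotMatrix_row_first (fun j v => v * x j) (fun _ => zero_mul _) hN]
    ring
  interior k hk hkN := by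
    simp only [mulVec, dotProduct]
    rw [sum_notAKnotMatrix_row_interior (fun j v => v * x j) (fun _ => zero_mul _) hk hkN]
  last := by
    simp only [mulVec, dotProduct]
    rw [sum_notAKnotMatrix_row_last (fun j v => v * x j) (fun _ => zero_mul _) hN]
    ring

theorem abs_le_nine_mul_of_abs_mulVec_le (hN : 4 ≤ N)
    (hw : SplineWeights N μ lam)
    (x : Fin (N + 1) → ℝ) (s : ℝ) (hs : ∀ i, |(notAKnotMatrix N μ lam *ᵥ x) i| ≤ s)
    (i : Fin (N + 1)) : |x i| ≤ 9 * s := by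
  simpa using (notAKnotSystem_mulVec (by omega) hw x).abs_le_nine_mul (fun k => hs k) hN i.is_le

theorem rowSumNorm_notAKnotMatrix (hN : 2 ≤ N)
    (hw : SplineWeights N μ lam) :
    rowSumNorm (notAKnotMatrix N μ lam) = 3 := by
  have sum_abs := fun {k : ℕ} (hk : 1 ≤ k) (hkN : k + 1 ≤ N) =>
    sum_notAKnotMatrix_row_interior (μ := μ) (lam := lam) (fun _ v => |v|) (fun _ => abs_zero)
      hk hkN
  obtain ⟨hμ₁, hl₁, hμl₁⟩ := hw 1 le_rfl (by omega)
  refine rowSumNorm_eq_of_le (fun i => ?_) (1 : ℕ) ?_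
  · rw [← Fin.cast_val_eq_self i]
    rcases (show (i : ℕ) = 0 ∨ (i : ℕ) = N ∨ (1 ≤ (i : ℕ) ∧ (i : ℕ) + 1 ≤ N) by omega)
      with h | h | ⟨h₁, h₂⟩
    · rw [h, sum_notAKnotMatrix_row_first (fun _ v => |v|) (fun _ => abs_zero) hN, abs_neg,
        abs_one, abs_of_nonneg hμ₁, abs_of_nonneg hl₁]
      linarith
    · obtain ⟨hμ, hl, hμl⟩ := hw (N - 1) (by omega) (by omega)
      rw [h, sum_notAKnotMatrix_row_last (fun _ v => |v|) (fun _ => abs_zero) hN, abs_neg,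
        abs_one, abs_of_nonneg hμ, abs_of_nonneg hl]
      linarith
    · obtain ⟨hμ, hl, hμl⟩ := hw i h₁ h₂
      rw [sum_abs h₁ h₂, abs_of_nonneg hμ, abs_of_nonneg hl, abs_two]
      linarith
  · rw [sum_abs le_rfl (by omega), abs_of_nonneg hμ₁, abs_of_nonneg hl₁, abs_two]
    linarith

end

/-- **Theorem 4.8 (conditioning of the not-a-knot cubic spline system).**
Let `N ≥ 5` and let `A ∈ ℝ^{(N+1)×(N+1)}` be the coefficient matrix of the not-a-knot
cubic spline system: row `0` has entries `λ₁, −1, μ₁` in columns `0, 1, 2`; row `i`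
(`1 ≤ i ≤ N−1`) has entries `μ_i, 2, λ_i` in columns `i−1, i, i+1`; row `N` has entries
`λ_{N−1}, −1, μ_{N−1}` in columns `N−2, N−1, N`; all other entries zero, where
`μ_i, λ_i ∈ (0,1)` and `μ_i + λ_i = 1` for `i = 1, …, N−1`.  Then `‖A‖_∞ = 3` and
`cond_∞(A) = ‖A‖_∞ ‖A⁻¹‖_∞ < 54`. -/
theorem stmt8 (N : ℕ) (hN : 5 ≤ N)
    (μ lam : ℕ → ℝ)
    (hμlam : ∀ i, 1 ≤ i → i ≤ N - 1 →
      μ i ∈ Set.Ioo (0 : ℝ) 1 ∧ lam i ∈ Set.Ioo (0 : ℝ) 1 ∧ μ i + lam i = 1)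
    (A : Matrix (Fin (N + 1)) (Fin (N + 1)) ℝ)
    (hA : ∀ i j : Fin (N + 1), A i j =
      if (i : ℕ) = 0 then
        (if (j : ℕ) = 0 then lam 1 else if (j : ℕ) = 1 then -1
         else if (j : ℕ) = 2 then μ 1 else 0)
      else if (i : ℕ) = N then
        (if (j : ℕ) = N - 2 then lam (N - 1) else if (j : ℕ) = N - 1 then -1
         else if (j : ℕ) = N then μ (N - 1) else 0)
      else
        (if (j : ℕ) + 1 = (i : ℕ) then μ (i : ℕ) else if (j : ℕ) = (i : ℕ) then 2
         else if (j : ℕ) = (i : ℕ) + 1 then lam (i : ℕ) else 0)) :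
    rowSumNorm A = 3 ∧ rowSumNorm A * rowSumNorm A⁻¹ < 54 := by
  have hw : SplineWeights N μ lam := fun k h₁ h₂ =>
    have ⟨hμ, hl, hμl⟩ := hμlam k h₁ (by omega)
    ⟨hμ.1.le, hl.1.le, hμl⟩
  obtain rfl : A = notAKnotMatrix N μ lam := Matrix.ext hA
  have hnorm := rowSumNorm_notAKnotMatrix (by omega) hw
  have hinv : rowSumNorm (notAKnotMatrix N μ lam)⁻¹ ≤ 9 := rowSumNorm_inv_le (by norm_num)
    fun x s hs => abs_le_nine_mul_of_abs_mulVec_le (by omega) hw x s hs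
  refine ⟨hnorm, ?_⟩
  rw [hnorm]
  linarith
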